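/- arXiv:1409.7996 — 2 statements merged into one kernel-verified Lean document; each statement's English description precedes it below -/
import Mathlib

section
/- If λ' is regular dominant and λ is (possibly singular) dominant, both weakly decreasing integer vectors of length n, then the normal fan of GT_{λ'} refines the normal fan of GT_λ; concretely, for every vertex v' of GT_{λ'} there exists a vertex v of GT_λ such that C_v − v ⊆ C_{v'} − v', namely the point v obtained from v' by replacing every coordinate equal to λ'_j by λ_j. -/
open scoped BigOperators Classical

/-- Index type for Gelfand–Tsetlin pattern positions: (row, column), 0-based. -/
abbrev GTIdx (n : ℕ) := Fin n × Fin n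

/-- A position (i,j) is a valid pattern position iff i + j < n (row i has columns 0..n-1-i). -/
def GTValid (n : ℕ) (p : GTIdx n) : Prop := (p.1 : ℕ) + (p.2 : ℕ) < n

/-- Entry of a real point at natural-number coordinates (0 outside the index range). -/
noncomputable def entryR {n : ℕ} (A : GTIdx n → ℝ) (i j : ℕ) : ℝ :=
  if h : i < n ∧ j < n then A (⟨i, h.1⟩, ⟨j, h.2⟩) else 0

/-- Entry of an integer point at natural-number coordinates (0 outside the index range). -/
def entryZ {n : ℕ} (A : GTIdx n → ℤ) (i j : ℕ) : ℤ :=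
  if h : i < n ∧ j < n then A (⟨i, h.1⟩, ⟨j, h.2⟩) else 0

/-- The Gelfand–Tsetlin polytope of λ: top row equal to λ, interlacing inequalities,
and (as a normalization embedding it in a finite-dimensional space) zero at invalid positions. -/
def GTPoly (n : ℕ) (lam : Fin n → ℝ) : Set (GTIdx n → ℝ) :=
  {A | (∀ j : Fin n, entryR A 0 j = lam j)
    ∧ (∀ i j : ℕ, i + 1 + j < n →
        entryR A (i+1) j ≤ entryR A i j ∧ entryR A i (j+1) ≤ entryR A (i+1) j)
    ∧ (∀ p : GTIdx n, ¬ GTValid n p → A p = 0)}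

/-- Integer Gelfand–Tsetlin patterns with top row λ. -/
def GTPat (n : ℕ) (lam : Fin n → ℤ) : Set (GTIdx n → ℤ) :=
  {A | (∀ j : Fin n, entryZ A 0 j = lam j)
    ∧ (∀ i j : ℕ, i + 1 + j < n →
        entryZ A (i+1) j ≤ entryZ A i j ∧ entryZ A i (j+1) ≤ entryZ A (i+1) j)
    ∧ (∀ p : GTIdx n, ¬ GTValid n p → A p = 0)}

/-- The weight of a pattern: μ_i = (sum of row i-1) - (sum of row i), 1-based;
here `i : Fin n` is 0-based, so `wtZ A i = (row i sum) - (row (i+1) sum)`. -/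
def wtZ {n : ℕ} (A : GTIdx n → ℤ) (i : Fin n) : ℤ :=
  (∑ j : Fin n, entryZ A i j) - ∑ j : Fin n, entryZ A ((i : ℕ) + 1) j

noncomputable def wtR {n : ℕ} (A : GTIdx n → ℝ) (i : Fin n) : ℝ :=
  (∑ j : Fin n, entryR A i j) - ∑ j : Fin n, entryR A ((i : ℕ) + 1) j

/-- Multiset of entries of row i. -/
noncomputable def rowM {n : ℕ} (A : GTIdx n → ℝ) (i : ℕ) : Multiset ℝ :=
  (Finset.univ.filter (fun j : Fin n => i + (j : ℕ) < n)).val.map (fun j => entryR A i (j : ℕ))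

/-- Valid pattern positions (the nodes of the ambient graph T). -/
abbrev GTNode (n : ℕ) := {p : GTIdx n // GTValid n p}

/-- `upEdge n p q` : q is an upper neighbour of p in the triangular graph T,
i.e. q = (i-1, j) or (i-1, j+1) where p = (i, j). -/
def upEdge (n : ℕ) (p q : GTIdx n) : Prop :=
  GTValid n p ∧ GTValid n q ∧ (q.1 : ℕ) + 1 = (p.1 : ℕ) ∧
    ((q.2 : ℕ) = (p.2 : ℕ) ∨ (q.2 : ℕ) = (p.2 : ℕ) + 1)

/-- The equality graph Γ_v of a point v of the GT polytope: nodes are valid positions,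
edges join a position to an upper neighbour carrying an equal entry. -/
def Gamma (n : ℕ) (A : GTIdx n → ℝ) : SimpleGraph (GTNode n) where
  Adj p q := (upEdge n p.1 q.1 ∨ upEdge n q.1 p.1) ∧ A p.1 = A q.1
  symm := by
    constructor
    rintro p q ⟨h, e⟩
    exact ⟨h.symm, e.symm⟩
  loopless := by
    constructor
    rintro p ⟨h | h, _⟩ <;> exact absurd h.2.2.1 (by omega)

/-- Tangent cone of a convex set P at a point v. -/
def tangentCone {E : Type*} [AddCommGroup E] [Module ℝ E] (P : Set E) (v : E) : Set E :=
  {y | ∃ x ∈ P, ∃ t : ℝ, 0 ≤ t ∧ y = v + t • (x - v)}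

/-- The ray from v in direction ε. -/
def raySet {E : Type*} [AddCommGroup E] [Module ℝ E] (v ε : E) : Set E :=
  {y | ∃ t : ℝ, 0 ≤ t ∧ y = v + t • ε}

/-- ε is the direction of an edge (one-dimensional extreme face) of the cone C with apex v. -/
def IsEdgeDir {E : Type*} [AddCommGroup E] [Module ℝ E] (C : Set E) (v ε : E) : Prop :=
  ε ≠ 0 ∧ IsExtreme ℝ C (raySet v ε)

/-- Direction-vector pattern for edges at a simplicial vertex: all nonzero coordinates lie
in rows a..b, one per row, and all are equal to c. -/
def simpDir (n : ℕ) (a b : ℕ) (c : ℝ) (ε : GTIdx n → ℝ) : Prop :=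
  (∀ p : GTIdx n, ε p ≠ 0 → GTValid n p ∧ a ≤ (p.1 : ℕ) ∧ (p.1 : ℕ) ≤ b)
  ∧ (∀ r : ℕ, a ≤ r → r ≤ b → ∃! p : GTIdx n, (p.1 : ℕ) = r ∧ ε p ≠ 0)
  ∧ (∀ p : GTIdx n, ε p ≠ 0 → ε p = c)

/-- A simplicial vertex: a vertex (extreme point) of the GT polytope whose equality graph
is acyclic. -/
def IsSimpVertex (n : ℕ) (lam : Fin n → ℝ) (A : GTIdx n → ℝ) : Prop :=
  A ∈ Set.extremePoints ℝ (GTPoly n lam) ∧ (Gamma n A).IsAcyclic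

/- ### Rational functions, integer-point transforms, and the specialization F -/

/-- Field of rational functions in variables indexed by ι. -/
abbrev KK (ι : Type) := FractionRing (MvPolynomial ι ℚ)

/-- The monomial t^u, u ∈ ℤ^ι, inside the rational function field. -/
noncomputable def tmon (ι : Type) [Fintype ι] (u : ι → ℤ) : KK ι :=
  ∏ i, (algebraMap (MvPolynomial ι ℚ) (KK ι) (MvPolynomial.X i)) ^ (u i)

/-- Indicator (as coefficient function of a formal Laurent series) of the integer points of S. -/
noncomputable def indSet {ι : Type} (S : Set (ι → ℝ)) : (ι → ℤ) → ℚ :=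
  fun a => if (fun i => (a i : ℝ)) ∈ S then 1 else 0

/-- `Represents r f` : the rational function r is the integer-point transform of the formal
Laurent series with coefficient function f, i.e. there is a nonzero Laurent polynomial q such
that q·f is a (finitely supported) Laurent polynomial g and r·q = g as rational functions. -/
noncomputable def Represents {ι : Type} [Fintype ι] (r : KK ι) (f : (ι → ℤ) → ℚ) : Prop :=
  ∃ q : (ι → ℤ) →₀ ℚ, q ≠ 0 ∧ ∃ g : (ι → ℤ) →₀ ℚ,
    (∀ a, g a = ∑ b ∈ q.support, q b * f (a - b)) ∧
    r * (∑ b ∈ q.support, (q b : KK ι) * tmon ι b)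
      = ∑ a ∈ g.support, (g a : KK ι) * tmon ι a

/-- Field of rational functions in x_1, ..., x_n. -/
abbrev Kx (n : ℕ) := FractionRing (MvPolynomial (Fin n) ℚ)

/-- The variable x_i. -/
noncomputable def xv (n : ℕ) (i : Fin n) : Kx n :=
  algebraMap (MvPolynomial (Fin n) ℚ) (Kx n) (MvPolynomial.X i)

/-- The substitution underlying F: t_{0,j} ↦ x_1 and t_{i,j} ↦ x_i⁻¹ x_{i+1} for i ≥ 1
(1-based x's; in our 0-based indexing t_{i,·} ↦ x_{i-1}⁻¹ · x_i for i ≥ 1, t_{0,·} ↦ x_0). -/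
noncomputable def xsub (n : ℕ) (p : GTIdx n) : Kx n :=
  if (p.1 : ℕ) = 0 then xv n p.1
  else (xv n (⟨(p.1 : ℕ) - 1, Nat.lt_of_le_of_lt (Nat.sub_le _ _) p.1.isLt⟩ : Fin n))⁻¹ * xv n p.1

/-- The specialization F on Laurent polynomials, as a ring homomorphism. -/
noncomputable def phiF (n : ℕ) : MvPolynomial (GTIdx n) ℚ →+* Kx n :=
  MvPolynomial.eval₂Hom (Rat.castHom (Kx n)) (xsub n)

/-- `FSpec n r y` : the specialization F of the rational function r (in the t-variables)
is defined and equal to y; i.e. r = p/q with F(q) ≠ 0 and y = F(p)/F(q). -/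
noncomputable def FSpec (n : ℕ) (r : KK (GTIdx n)) (y : Kx n) : Prop :=
  ∃ p q : MvPolynomial (GTIdx n) ℚ, phiF n q ≠ 0 ∧
    r * algebraMap (MvPolynomial (GTIdx n) ℚ) (KK (GTIdx n)) q
      = algebraMap (MvPolynomial (GTIdx n) ℚ) (KK (GTIdx n)) p ∧
    y * phiF n q = phiF n p

/-- The monomial e^μ = x^μ for an integral weight μ. -/
noncomputable def emon {n : ℕ} (mu : Fin n → ℤ) : Kx n := ∏ i, xv n i ^ mu i

/-- ρ = (n-1, n-2, ..., 0). -/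
def rhoW (n : ℕ) (i : Fin n) : ℤ := (n : ℤ) - 1 - (i : ℤ)

/-- The Schur (Laurent) polynomial of λ, defined by Weyl's character formula
(bialternant form). -/
noncomputable def schur (n : ℕ) (lam : Fin n → ℤ) : Kx n :=
  (∑ w : Equiv.Perm (Fin n), ((Equiv.Perm.sign w : ℤ) : Kx n)
      * ∏ i, xv n i ^ (lam (w⁻¹ i) + rhoW n (w⁻¹ i)))
  / (∑ w : Equiv.Perm (Fin n), ((Equiv.Perm.sign w : ℤ) : Kx n)
      * ∏ i, xv n i ^ (rhoW n (w⁻¹ i)))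

/-- The summand w(e^λ / Π_{i<j} (1 - x_j/x_i)) of Weyl's character formula. -/
noncomputable def weylTerm (n : ℕ) (lam : Fin n → ℤ) (w : Equiv.Perm (Fin n)) : Kx n :=
  (∏ i, xv n (w i) ^ lam i)
    / ∏ p ∈ Finset.univ.filter (fun p : Fin n × Fin n => p.1 < p.2),
        (1 - xv n (w p.2) / xv n (w p.1))

/-- Integer version of the edge-direction pattern. -/
def simpDirZ (n : ℕ) (a b : ℕ) (c : ℤ) (ε : GTIdx n → ℤ) : Prop :=
  (∀ p : GTIdx n, ε p ≠ 0 → GTValid n p ∧ a ≤ (p.1 : ℕ) ∧ (p.1 : ℕ) ≤ b)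
  ∧ (∀ r : ℕ, a ≤ r → r ≤ b → ∃! p : GTIdx n, (p.1 : ℕ) = r ∧ ε p ≠ 0)
  ∧ (∀ p : GTIdx n, ε p ≠ 0 → ε p = c)

/-- F(t^u): the specialization of the Laurent monomial t^u. -/
noncomputable def Fmon (n : ℕ) (u : GTIdx n → ℤ) : Kx n := ∏ p, xsub n p ^ u p

/-- A rational polytope in ℝ^m: a bounded set cut out by finitely many integral
linear inequalities. -/
def IsRatPolytope (m : ℕ) (P : Set (Fin m → ℝ)) : Prop :=
  Bornology.IsBounded P ∧ ∃ (k : ℕ) (a : Fin k → Fin m → ℤ) (b : Fin k → ℤ),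
    P = {x | ∀ i, ∑ j, (a i j : ℝ) * x j ≤ (b i : ℝ)}

/-- A rational polyhedron in ℝ^m. -/
def IsRatPolyhedron (m : ℕ) (P : Set (Fin m → ℝ)) : Prop :=
  ∃ (k : ℕ) (a : Fin k → Fin m → ℤ) (b : Fin k → ℤ),
    P = {x | ∀ i, ∑ j, (a i j : ℝ) * x j ≤ (b i : ℝ)}

/-- The cone C_Δ attached to a connected component Δ = c of the equality graph Γ_v:
vectors supported on the nodes of Δ, vanishing at the top (row-0) node of Δ, and
satisfying the interlacing inequalities along the edges of Δ. -/
noncomputable def compCone (n : ℕ) (A : GTIdx n → ℝ) (c : (Gamma n A).ConnectedComponent) :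
    Set (GTIdx n → ℝ) :=
  {x | (∀ p : GTIdx n,
          (¬ ∃ hp : GTValid n p, (Gamma n A).connectedComponentMk ⟨p, hp⟩ = c) → x p = 0)
    ∧ (∀ p : GTNode n, (Gamma n A).connectedComponentMk p = c → (p.1.1 : ℕ) = 0 → x p.1 = 0)
    ∧ (∀ p q : GTNode n, (Gamma n A).connectedComponentMk p = c →
        upEdge n p.1 q.1 → A p.1 = A q.1 →
        (((q.1.2 : ℕ) = (p.1.2 : ℕ)) → x p.1 ≤ x q.1) ∧
        (((q.1.2 : ℕ) = (p.1.2 : ℕ) + 1) → x q.1 ≤ x p.1))}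

/-!
A direction `ε` is feasible at a point `w` of a GT polytope iff it vanishes on the coordinates
the polytope fixes and respects every interlacing inequality that is tight at `w`. Since `λ'` is
regular, every coordinate of the vertex `v'` is some `λ'_j`, so `v` is obtained from `v'` by the
order-preserving relabelling `λ'_j ↦ λ_j`; hence every inequality tight at `v'` is tight at `v`.
Therefore feasible directions at `v` are feasible at `v'`, which is the inclusion of tangent
cones, and a segment through `v` inside `GT_λ` would yield directions `±ε` feasible at `v'`,
contradicting that `v'` is a vertex.
-/

open Filter Topology

/-- `A p ≤ A q` is one of the interlacing inequalities cutting out `GTPoly n _`. -/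
def GTLe (n : ℕ) (p q : GTIdx n) : Prop :=
  GTValid n p ∧ GTValid n q ∧
    (((p.1 : ℕ) = q.1 + 1 ∧ (p.2 : ℕ) = q.2) ∨ ((q.1 : ℕ) = p.1 + 1 ∧ (p.2 : ℕ) = q.2 + 1))

lemma entryR_of_lt {n : ℕ} (A : GTIdx n → ℝ) {i j : ℕ} (hi : i < n) (hj : j < n) :
    entryR A i j = A (⟨i, hi⟩, ⟨j, hj⟩) :=
  dif_pos ⟨hi, hj⟩

lemma mem_GTPoly_iff {n : ℕ} {μ : Fin n → ℝ} {A : GTIdx n → ℝ} :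
    A ∈ GTPoly n μ ↔ (∀ p : GTIdx n, (p.1 : ℕ) = 0 → A p = μ p.2) ∧
      (∀ p q, GTLe n p q → A p ≤ A q) ∧ (∀ p, ¬ GTValid n p → A p = 0) := by
  refine ⟨fun ⟨htop, hle, hzero⟩ => ⟨?_, ?_, hzero⟩, fun ⟨htop, hle, hzero⟩ => ⟨?_, ?_, hzero⟩⟩
  · rintro ⟨⟨i, hi⟩, j⟩ (rfl : i = 0)
    simpa [entryR_of_lt A hi j.isLt] using htop j
  · rintro ⟨⟨a, ha⟩, ⟨b, hb⟩⟩ ⟨⟨c, hc⟩, ⟨d, hd⟩⟩ ⟨hp, hq, ⟨hac, hbd⟩ | ⟨hca, hbd⟩⟩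
    · simp only at hac hbd
      subst hac hbd
      have := (hle c b (by simpa [GTValid] using hp)).1
      rwa [entryR_of_lt A ha hb, entryR_of_lt A hc hb] at this
    · simp only at hca hbd
      subst hca hbd
      have := (hle a d (by simpa [GTValid] using hq)).2
      rwa [entryR_of_lt A ha hb, entryR_of_lt A hc hd] at this
  · intro j
    rw [entryR_of_lt A j.pos j.isLt]
    exact htop _ rfl
  · intro i j h
    rw [entryR_of_lt A (i := i + 1) (j := j) (by omega) (by omega),
      entryR_of_lt A (i := i) (j := j) (by omega) (by omega),
      entryR_of_lt A (i := i) (j := j + 1) (by omega) (by omega)]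
    constructor <;> apply hle <;> refine ⟨?_, ?_, ?_⟩ <;> simp [GTValid] <;> omega

lemma eventually_add_mul_le_add_mul {ι : Type*} [Finite ι] {R : ι → ι → Prop} {w ε : ι → ℝ}
    (hw : ∀ p q, R p q → w p ≤ w q) (hε : ∀ p q, R p q → w p = w q → ε p ≤ ε q) :
    ∀ᶠ t in 𝓝[>] (0 : ℝ), ∀ p q, R p q → w p + t * ε p ≤ w q + t * ε q := by
  refine eventually_all.2 fun p => eventually_all.2 fun q => ?_
  by_cases hpq : R p q
  · rcases (hw p q hpq).eq_or_lt with heq | hlt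
    · filter_upwards [self_mem_nhdsWithin] with t (ht : 0 < t) _
      rw [heq]
      gcongr
      exact hε p q hpq heq
    · have : ∀ᶠ t in 𝓝 (0 : ℝ), w p + t * ε p < w q + t * ε q :=
        ContinuousAt.eventually_lt (by fun_prop) (by fun_prop) (by simpa using hlt)
      filter_upwards [nhdsWithin_le_nhds this] with t ht _ using ht.le
  · exact Eventually.of_forall fun _ h => absurd h hpq

section FeasibleDirection

variable {n : ℕ} {μ : Fin n → ℝ} {w ε : GTIdx n → ℝ}

lemma eventually_add_smul_mem_GTPoly (hw : w ∈ GTPoly n μ)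
    (htop : ∀ p : GTIdx n, (p.1 : ℕ) = 0 → ε p = 0) (hzero : ∀ p, ¬ GTValid n p → ε p = 0)
    (htight : ∀ p q, GTLe n p q → w p = w q → ε p ≤ ε q) :
    ∀ᶠ t in 𝓝[>] (0 : ℝ), w + t • ε ∈ GTPoly n μ := by
  rw [mem_GTPoly_iff] at hw
  filter_upwards [eventually_add_mul_le_add_mul hw.2.1 htight] with t ht
  exact mem_GTPoly_iff.2 ⟨fun p hp => by simp [hw.1 p hp, htop p hp], ht,
    fun p hp => by simp [hw.2.2 p hp, hzero p hp]⟩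

lemma eq_zero_of_mem_extremePoints_GTPoly (hw : w ∈ (GTPoly n μ).extremePoints ℝ)
    (htop : ∀ p : GTIdx n, (p.1 : ℕ) = 0 → ε p = 0) (hzero : ∀ p, ¬ GTValid n p → ε p = 0)
    (htight : ∀ p q, GTLe n p q → w p = w q → ε p = ε q) :
    ε = 0 := by
  have hplus := eventually_add_smul_mem_GTPoly hw.1 htop hzero fun p q h e => (htight p q h e).le
  have hminus := eventually_add_smul_mem_GTPoly (ε := -ε) hw.1
    (fun p hp => by simp [htop p hp]) (fun p hp => by simp [hzero p hp])
    fun p q h e => by simp [htight p q h e]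
  obtain ⟨t, ⟨hpt, hmt⟩, ht⟩ := ((hplus.and hminus).and self_mem_nhdsWithin).exists
  have hfix : w + t • ε = w :=
    hw.2 hpt hmt ⟨1 / 2, 1 / 2, by norm_num, by norm_num, by norm_num, by module⟩
  simpa [ht.ne'] using hfix

lemma exists_eq_of_mem_extremePoints_GTPoly (hw : w ∈ (GTPoly n μ).extremePoints ℝ)
    {p : GTIdx n} (hp : GTValid n p) : ∃ j, w p = μ j := by
  by_contra! hne
  let ε : GTIdx n → ℝ := fun q => if GTValid n q ∧ ∀ j, w q ≠ μ j then 1 else 0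
  have hε : ε = 0 := by
    refine eq_zero_of_mem_extremePoints_GTPoly hw (fun q hq => ?_) (fun q hq => by simp [ε, hq])
      fun q r h e => by simp [ε, h.1, h.2.1, e]
    simp [ε, (mem_GTPoly_iff.1 hw.1).1 q hq]
  simpa [ε, hp, hne] using congrFun hε p

end FeasibleDirection

section Monotone

variable {n : ℕ} {μ' μ : Fin n → ℝ} {v' v : GTIdx n → ℝ}

lemma eq_of_monotone_of_eq
    (hmono : ∀ p q, GTValid n p → GTValid n q → v' p ≤ v' q → v p ≤ v q)
    {p q : GTIdx n} (hp : GTValid n p) (hq : GTValid n q) (h : v' p = v' q) : v p = v q :=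
  (hmono p q hp hq h.le).antisymm (hmono q p hq hp h.ge)

lemma mem_GTPoly_of_monotone (hv' : v' ∈ GTPoly n μ')
    (htop : ∀ p : GTIdx n, (p.1 : ℕ) = 0 → v p = μ p.2) (hzero : ∀ p, ¬ GTValid n p → v p = 0)
    (hmono : ∀ p q, GTValid n p → GTValid n q → v' p ≤ v' q → v p ≤ v q) :
    v ∈ GTPoly n μ :=
  mem_GTPoly_iff.2
    ⟨htop, fun p q h => hmono p q h.1 h.2.1 ((mem_GTPoly_iff.1 hv').2.1 p q h), hzero⟩

lemma mem_extremePoints_GTPoly_of_monotone (hv' : v' ∈ (GTPoly n μ').extremePoints ℝ)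
    (hv : v ∈ GTPoly n μ) (hmono : ∀ p q, GTValid n p → GTValid n q → v' p ≤ v' q → v p ≤ v q) :
    v ∈ (GTPoly n μ).extremePoints ℝ := by
  refine ⟨hv, fun x hx y hy ⟨a, b, ha, hb, _, hxy⟩ => sub_eq_zero.1 ?_⟩
  rw [mem_GTPoly_iff] at hx hy hv
  refine eq_zero_of_mem_extremePoints_GTPoly hv' (fun p hp => by simp [hx.1 p hp, hv.1 p hp])
    (fun p hp => by simp [hx.2.2 p hp, hv.2.2 p hp]) fun p q hpq he => ?_
  have hvpq := eq_of_monotone_of_eq hmono hpq.1 hpq.2.1 he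
  have hp := congrFun hxy p
  have hq := congrFun hxy q
  simp only [Pi.add_apply, Pi.smul_apply, smul_eq_mul] at hp hq
  -- `a (x q - x p) + b (y q - y p) = v q - v p = 0` with both terms nonnegative
  have hxpq : x p = x q := by nlinarith [hx.2.1 p q hpq, hy.2.1 p q hpq]
  simp [hxpq, hvpq]

lemma image_sub_tangentCone_GTPoly_subset_of_monotone (hv' : v' ∈ GTPoly n μ')
    (hv : v ∈ GTPoly n μ) (hmono : ∀ p q, GTValid n p → GTValid n q → v' p ≤ v' q → v p ≤ v q) :
    (fun y => y - v) '' tangentCone (GTPoly n μ) v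
      ⊆ (fun y => y - v') '' tangentCone (GTPoly n μ') v' := by
  rintro _ ⟨_, ⟨x, hx, t, ht, rfl⟩, rfl⟩
  rw [mem_GTPoly_iff] at hx hv
  have hdir := eventually_add_smul_mem_GTPoly (ε := x - v) hv'
    (fun p hp => by simp [hx.1 p hp, hv.1 p hp]) (fun p hp => by simp [hx.2.2 p hp, hv.2.2 p hp])
    fun p q hpq he => by
      simpa [eq_of_monotone_of_eq hmono hpq.1 hpq.2.1 he] using hx.2.1 p q hpq
  obtain ⟨s, hs, hspos⟩ := (hdir.and self_mem_nhdsWithin).exists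
  refine ⟨_, ⟨_, hs, t / s, div_nonneg ht hspos.le, rfl⟩, ?_⟩
  simp only [add_sub_cancel_left, smul_smul, div_mul_cancel₀ _ hspos.ne']

end Monotone

/-- for regular dominant λ' and dominant λ, the normal fan of GT_{λ'} refines
that of GT_λ: for any vertex v' of GT_{λ'}, the point v obtained by replacing every
coordinate equal to λ'_j by λ_j is a vertex of GT_λ and C_v - v ⊆ C_{v'} - v'. -/
theorem statement16 (n : ℕ) (lam' lam : Fin n → ℤ)
    (hreg' : ∀ i j : Fin n, i < j → lam' j < lam' i)
    (hdom : ∀ i j : Fin n, i ≤ j → lam j ≤ lam i)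
    (v' : GTIdx n → ℝ)
    (hv' : v' ∈ Set.extremePoints ℝ (GTPoly n (fun i => (lam' i : ℝ))))
    (v : GTIdx n → ℝ)
    (hvdef : ∀ p : GTIdx n, GTValid n p → ∀ j : Fin n,
      v' p = (lam' j : ℝ) → v p = (lam j : ℝ))
    (hv0 : ∀ p : GTIdx n, ¬ GTValid n p → v p = 0) :
    v ∈ Set.extremePoints ℝ (GTPoly n (fun i => (lam i : ℝ))) ∧
    (fun y => y - v) '' tangentCone (GTPoly n (fun i => (lam i : ℝ))) v
      ⊆ (fun y => y - v') '' tangentCone (GTPoly n (fun i => (lam' i : ℝ))) v' := by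
  have hlam' : StrictAnti fun i => (lam' i : ℝ) := fun i j h => by simpa using hreg' i j h
  have hlam : Antitone fun i => (lam i : ℝ) := fun i j h => by simpa using hdom i j h
  have hmono : ∀ p q, GTValid n p → GTValid n q → v' p ≤ v' q → v p ≤ v q := by
    intro p q hp hq hle
    obtain ⟨i, hi⟩ := exists_eq_of_mem_extremePoints_GTPoly hv' hp
    obtain ⟨j, hj⟩ := exists_eq_of_mem_extremePoints_GTPoly hv' hq
    rw [hvdef p hp i hi, hvdef q hq j hj]
    exact hlam (hlam'.le_iff_ge.1 (hi ▸ hj ▸ hle))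
  have htop : ∀ p : GTIdx n, (p.1 : ℕ) = 0 → v p = lam p.2 := fun p hp =>
    hvdef p (by simp [GTValid, hp]) p.2 ((mem_GTPoly_iff.1 hv'.1).1 p hp)
  have hv := mem_GTPoly_of_monotone (μ := fun i => (lam i : ℝ)) hv'.1 htop hv0 hmono
  exact ⟨mem_extremePoints_GTPoly_of_monotone hv' hv hmono,
    image_sub_tangentCone_GTPoly_subset_of_monotone hv'.1 hv hmono⟩
end

section
/- For a rational polyhedron P ⊆ ℝ^m containing an affine line with integer direction vector u ≠ 0, the integer-point transform satisfies t^u · σ(P) = σ(P), and hence σ(P) = 0. -/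
open scoped BigOperators Classical

/-!
The linear forms defining `P` are bounded above along the line, so they vanish on `u` and the
integer points of `P` are invariant under translation by `u`. If `q · S(P) = g` with `q ≠ 0`,
then `g` is a `u`-periodic Laurent polynomial, hence `g = 0` because `u ≠ 0`; as `q` is a
nonzero element of the field of rational functions, `σ(P) = 0`, and `t^u σ(P) = σ(P)` follows.
-/

theorem Finsupp.eq_zero_of_periodic {G M : Type*} [AddCommGroup G] [IsAddTorsionFree G] [Zero M]
    (g : G →₀ M) {u : G} (hu : u ≠ 0) (hg : Function.Periodic g u) : g = 0 := by
  by_contra hne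
  obtain ⟨a, ha⟩ := g.support_nonempty_iff.mpr hne
  have horbit_inj : Function.Injective fun n : ℕ => a + n • u :=
    (add_right_injective a).comp ((IsAddLeftRegular.all u).nsmul_injective hu)
  have horbit_mem (n : ℕ) : a + n • u ∈ (g.support : Set G) := by
    simpa only [Finset.mem_coe, Finsupp.mem_support_iff, hg.nsmul n a] using ha
  exact Set.infinite_of_injective_forall_mem horbit_inj horbit_mem g.support.finite_toSet

theorem algebraMap_X_ne_zero {ι : Type} (i : ι) :
    algebraMap (MvPolynomial ι ℚ) (KK ι) (MvPolynomial.X i) ≠ 0 :=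
  (map_ne_zero_iff _ (IsFractionRing.injective _ _)).mpr (MvPolynomial.X_ne_zero i)

theorem MvPolynomial.coeff_sum_monomial_of_injOn {α σ R : Type*} [CommSemiring R] {s : Finset α}
    {e : α → σ →₀ ℕ} (he : Set.InjOn e s) (c : α → R) {a : α} (ha : a ∈ s) :
    coeff (e a) (∑ b ∈ s, monomial (e b) (c b)) = c a := by
  rw [coeff_sum, Finset.sum_eq_single a
    (fun b hb hba => by rw [coeff_monomial, if_neg fun h => hba (he hb ha h)]) (absurd ha),
    coeff_monomial, if_pos rfl]

section LaurentMonomials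

variable {ι : Type} [Fintype ι]

theorem tmon_add (u v : ι → ℤ) : tmon ι (u + v) = tmon ι u * tmon ι v := by
  simp only [tmon, Pi.add_apply, zpow_add₀ (algebraMap_X_ne_zero _), Finset.prod_mul_distrib]

theorem tmon_natCast (n : ι →₀ ℕ) :
    tmon ι (fun i => n i) = algebraMap (MvPolynomial ι ℚ) (KK ι) (MvPolynomial.monomial n 1) := by
  rw [tmon, ← MvPolynomial.prod_X_pow_eq_monomial, map_prod, Finset.prod_subset
    n.support.subset_univ fun i _ hi => by simp [Finsupp.notMem_support_iff.mp hi]]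
  simp only [zpow_natCast, map_pow]

theorem sum_mul_tmon_ne_zero {q : (ι → ℤ) →₀ ℚ} (hq : q ≠ 0) :
    ∑ b ∈ q.support, (q b : KK ι) * tmon ι b ≠ 0 := by
  -- shifting every exponent by `N` makes all of them nonnegative
  set N : ι → ℕ := fun i => q.support.sup fun b => (-b i).toNat
  let e : (ι → ℤ) → (ι →₀ ℕ) := fun b => Finsupp.equivFunOnFinite.symm fun i => (b i + N i).toNat
  have he (b : ι → ℤ) (hb : b ∈ q.support) : (fun i => (e b i : ℤ)) = b + fun i => (N i : ℤ) := by
    funext i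
    have : (-b i).toNat ≤ N i := Finset.le_sup (f := fun b => (-b i).toNat) hb
    simp only [e, Finsupp.equivFunOnFinite_symm_apply_apply, Pi.add_apply]
    omega
  have he_inj : Set.InjOn e q.support := fun b hb b' hb' h => by
    have := congrArg (fun d : ι →₀ ℕ => fun i => (d i : ℤ)) h
    simp only [he b hb, he b' hb'] at this
    exact add_right_cancel this
  set p := ∑ b ∈ q.support, MvPolynomial.monomial (e b) (q b)
  have hp : p ≠ 0 := by
    obtain ⟨b₀, hb₀⟩ := q.support_nonempty_iff.mpr hq
    refine ne_of_apply_ne (MvPolynomial.coeff (e b₀)) ?_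
    rw [MvPolynomial.coeff_sum_monomial_of_injOn he_inj _ hb₀, MvPolynomial.coeff_zero]
    exact q.mem_support_iff.mp hb₀
  have hshift : (∑ b ∈ q.support, (q b : KK ι) * tmon ι b) * tmon ι (fun i => N i)
      = algebraMap (MvPolynomial ι ℚ) (KK ι) p := by
    rw [Finset.sum_mul, map_sum]
    refine Finset.sum_congr rfl fun b hb => ?_
    rw [mul_assoc, ← tmon_add, ← he b hb, tmon_natCast,
      ← mul_one (q b), ← MvPolynomial.C_mul_monomial, map_mul, mul_one]
    exact congrArg (· * _) (eq_ratCast ((algebraMap _ (KK ι)).comp MvPolynomial.C) _).symm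
  intro h0
  rw [h0, zero_mul] at hshift
  exact hp ((map_eq_zero_iff _ (IsFractionRing.injective _ _)).mp hshift.symm)

end LaurentMonomials

theorem Represents.eq_zero_of_periodic {ι : Type} [Fintype ι] {r : KK ι} {f : (ι → ℤ) → ℚ}
    (hr : Represents r f) {u : ι → ℤ} (hu : u ≠ 0) (hf : Function.Periodic f u) : r = 0 := by
  obtain ⟨q, hq, g, hg, hrq⟩ := hr
  have hg_periodic : Function.Periodic g u := fun a => by
    simp only [hg, add_sub_right_comm, hf _]
  rw [g.eq_zero_of_periodic hu hg_periodic, Finsupp.support_zero, Finset.sum_empty] at hrq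
  exact (mul_eq_zero.mp hrq).resolve_right (sum_mul_tmon_ne_zero hq)

theorem eq_zero_of_forall_add_mul_le {c s b : ℝ} (h : ∀ t : ℝ, c + t * s ≤ b) : s = 0 := by
  by_contra hs
  have := h ((b - c + 1) / s)
  rw [div_mul_cancel₀ _ hs] at this
  linarith

theorem IsRatPolyhedron.add_mem_iff {m : ℕ} {P : Set (Fin m → ℝ)} (hP : IsRatPolyhedron m P)
    {x v : Fin m → ℝ} (hline : ∀ t : ℝ, x + t • v ∈ P) (y : Fin m → ℝ) : y + v ∈ P ↔ y ∈ P := by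
  obtain ⟨k, a, b, rfl⟩ := hP
  have hperp (i : Fin k) : (fun j => (a i j : ℝ)) ⬝ᵥ v = 0 :=
    eq_zero_of_forall_add_mul_le (b := b i) fun t => by
      have hmem : (fun j => (a i j : ℝ)) ⬝ᵥ (x + t • v) ≤ b i := hline t i
      rwa [dotProduct_add, dotProduct_smul, smul_eq_mul] at hmem
  change (∀ i, (fun j => (a i j : ℝ)) ⬝ᵥ (y + v) ≤ b i) ↔ ∀ i, (fun j => (a i j : ℝ)) ⬝ᵥ y ≤ b i
  simp only [dotProduct_add, hperp, add_zero]

theorem indSet_periodic {ι : Type} {S : Set (ι → ℝ)} {u : ι → ℤ}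
    (h : ∀ y, y + (fun i => (u i : ℝ)) ∈ S ↔ y ∈ S) : Function.Periodic (indSet S) u := by
  intro a
  simp only [indSet, Pi.add_apply, Int.cast_add]
  exact if_congr (h _) rfl rfl

/-- a rational polyhedron containing an affine line with integer direction
u ≠ 0 has integer-point transform satisfying t^u σ(P) = σ(P), hence σ(P) = 0. -/
theorem statement17 (m : ℕ) (P : Set (Fin m → ℝ)) (hP : IsRatPolyhedron m P)
    (u : Fin m → ℤ) (hu : u ≠ 0)
    (hline : ∃ x : Fin m → ℝ, ∀ t : ℝ, (fun i => x i + t * (u i : ℝ)) ∈ P)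
    (r : KK (Fin m)) (hr : Represents r (indSet P)) :
    tmon (Fin m) u * r = r ∧ r = 0 := by
  obtain ⟨x, hx⟩ := hline
  have hr0 : r = 0 := hr.eq_zero_of_periodic hu (indSet_periodic (hP.add_mem_iff hx))
  exact ⟨by rw [hr0, mul_zero], hr0⟩
end
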